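/- arXiv:1910.05295 — 3 statements merged into one kernel-verified Lean document; each statement's English description precedes it below -/
import Mathlib

section
/- Let S be the sparsity pattern of a symmetric matrix C, S_u the sparsity pattern of its upper triangular part (including the diagonal), H_u the selection matrix extracting the nonzero upper-triangular positions, and A = (1ₙᵀ⊗Iₙ + Iₙ⊗1ₙᵀ) H_uᵀ. Then for any upper triangular n×n matrix D, A diag(H_u vec(D)) Aᵀ = S ⊙ (D + Dᵀ) + diag((S ⊙ (D + Dᵀ)) 1ₙ). -/
open Matrix
open scoped Matrix

/-- Column-wise vectorization of a square matrix, indexed by (column, row). -/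
def mvec {n : ℕ} (M : Matrix (Fin n) (Fin n) ℝ) : Fin n × Fin n → ℝ :=
  fun p => M p.2 p.1

/-- The matrix `1ₙᵀ ⊗ Iₙ` acting on vectorized matrices (so that it computes row sums). -/
def rowSumMat (n : ℕ) : Matrix (Fin n) (Fin n × Fin n) ℝ :=
  Matrix.of fun i p => if i = p.2 then 1 else 0

/-- The matrix `Iₙ ⊗ 1ₙᵀ` acting on vectorized matrices (so that it computes column sums). -/
def colSumMat (n : ℕ) : Matrix (Fin n) (Fin n × Fin n) ℝ :=
  Matrix.of fun i p => if i = p.1 then 1 else 0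

/-- `A diag(H_u vec D) Aᵀ = S ⊙ (D + Dᵀ) + diag((S ⊙ (D + Dᵀ)) 1)` for upper triangular `D`,
where `A = (1ᵀ⊗I + I⊗1ᵀ) H_uᵀ` and `H_u` selects the upper-triangular support of symmetric `C`. -/
theorem A_diag_A_transpose {n m : ℕ} (C : Matrix (Fin n) (Fin n) ℝ) (hC : Cᵀ = C)
    (S Su : Matrix (Fin n) (Fin n) ℝ)
    (hSdef : ∀ i j, S i j = if C i j ≠ 0 then 1 else 0)
    (hSudef : ∀ i j, Su i j = if C i j ≠ 0 ∧ i ≤ j then 1 else 0)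
    (ι : Fin m → Fin n × Fin n) (hι : Function.Injective ι)
    (hrange : ∀ p : Fin n × Fin n, Su p.2 p.1 = 1 ↔ ∃ k, ι k = p)
    (Hu : Matrix (Fin m) (Fin n × Fin n) ℝ)
    (hHu : ∀ k p, Hu k p = if ι k = p then 1 else 0)
    (A : Matrix (Fin n) (Fin m) ℝ) (hA : A = (rowSumMat n + colSumMat n) * Huᵀ)
    (D : Matrix (Fin n) (Fin n) ℝ) (hD : ∀ i j : Fin n, j < i → D i j = 0) :
    A * Matrix.diagonal (Hu.mulVec (mvec D)) * Aᵀ =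
      S ⊙ (D + Dᵀ) + Matrix.diagonal (fun i => ∑ j, (S ⊙ (D + Dᵀ)) i j) := by
  have hSu01 : ∀ a b : Fin n, Su a b = 0 ∨ Su a b = 1 := by
    intro a b; rw [hSudef]; split <;> simp
  have key : ∀ g : Fin n × Fin n → ℝ,
      (∑ p : Fin n × Fin n, Su p.2 p.1 * g p) = ∑ k, g (ι k) := by
    intro g
    have h1 : ∀ p : Fin n × Fin n, Su p.2 p.1 * g p =
        if p ∈ Finset.univ.image ι then g p else 0 := by
      intro p
      by_cases hp : ∃ k, ι k = p
      · rw [(hrange p).2 hp, one_mul, if_pos]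
        simpa using hp
      · have h0 : Su p.2 p.1 = 0 := by
          rcases hSu01 p.2 p.1 with h | h
          · exact h
          · exact absurd ((hrange p).1 h) hp
        rw [h0, zero_mul, if_neg]
        simpa using hp
    rw [Finset.sum_congr rfl fun p _ => h1 p, Finset.sum_ite_mem, Finset.univ_inter,
      Finset.sum_image (fun a _ b _ h => hι h)]
  have hd : ∀ k, Hu.mulVec (mvec D) k = D (ι k).2 (ι k).1 := by
    intro k
    simp [Matrix.mulVec, dotProduct, hHu, mvec, ite_mul, Finset.sum_ite_eq]
  have hAik : ∀ (a : Fin n) (k : Fin m),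
      A a k = (if a = (ι k).2 then (1:ℝ) else 0) + (if a = (ι k).1 then 1 else 0) := by
    intro a k
    simp [hA, Matrix.mul_apply, rowSumMat, colSumMat, Matrix.transpose_apply, hHu,
      mul_ite, mul_one, mul_zero, Finset.sum_ite_eq]
  have fact1 : ∀ a b : Fin n, Su a b * D a b = S a b * D a b := by
    intro a b
    rcases le_or_gt a b with h | h
    · rw [hSudef, hSdef]; simp [h]
    · rw [hD a b h]; simp
  have hCsymm : ∀ a b : Fin n, C a b = C b a := by
    intro a b; exact congrFun (congrFun hC.symm a) b
  have fact2 : ∀ a b : Fin n, S a b = S b a := by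
    intro a b; rw [hSdef, hSdef, hCsymm]
  ext i j
  have lhs_eq : (A * Matrix.diagonal (Hu.mulVec (mvec D)) * Aᵀ) i j
      = ∑ k, ((if i = (ι k).2 then (1:ℝ) else 0) + (if i = (ι k).1 then 1 else 0)) *
          D (ι k).2 (ι k).1 *
          ((if j = (ι k).2 then (1:ℝ) else 0) + (if j = (ι k).1 then 1 else 0)) := by
    rw [Matrix.mul_apply]
    refine Finset.sum_congr rfl fun k _ => ?_
    rw [Matrix.mul_diagonal, Matrix.transpose_apply, hd, hAik, hAik]
  rw [lhs_eq, ← key (fun p => ((if i = p.2 then (1:ℝ) else 0) + (if i = p.1 then 1 else 0)) *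
      D p.2 p.1 * ((if j = p.2 then (1:ℝ) else 0) + (if j = p.1 then 1 else 0)))]
  have step : ∀ p : Fin n × Fin n, Su p.2 p.1 *
      (((if i = p.2 then (1:ℝ) else 0) + (if i = p.1 then 1 else 0)) *
        D p.2 p.1 * ((if j = p.2 then (1:ℝ) else 0) + (if j = p.1 then 1 else 0)))
      = S p.2 p.1 * D p.2 p.1 *
        (((if i = p.2 then (1:ℝ) else 0) + (if i = p.1 then 1 else 0)) *
          ((if j = p.2 then (1:ℝ) else 0) + (if j = p.1 then 1 else 0))) := by
    intro p
    have : Su p.2 p.1 * (((if i = p.2 then (1:ℝ) else 0) + (if i = p.1 then 1 else 0)) *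
        D p.2 p.1 * ((if j = p.2 then (1:ℝ) else 0) + (if j = p.1 then 1 else 0)))
        = (Su p.2 p.1 * D p.2 p.1) *
          (((if i = p.2 then (1:ℝ) else 0) + (if i = p.1 then 1 else 0)) *
            ((if j = p.2 then (1:ℝ) else 0) + (if j = p.1 then 1 else 0))) := by ring
    rw [this, fact1]
  rw [Finset.sum_congr rfl fun p _ => step p]
  rw [Fintype.sum_prod_type]
  simp only [Matrix.add_apply, Matrix.hadamard_apply, Matrix.diagonal_apply,
    Matrix.transpose_apply, Matrix.hadamard_apply]
  rcases eq_or_ne i j with rfl | hij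
  · simp only [if_pos rfl, mul_add, add_mul, mul_ite, ite_mul, one_mul, mul_one,
      zero_mul, mul_zero, Finset.sum_add_distrib, Finset.sum_ite_eq, Finset.sum_ite_eq',
      Finset.mem_univ, if_true]
    rw [Finset.sum_comm]
    simp only [Finset.sum_ite_eq, Finset.mem_univ, if_true, Finset.sum_add_distrib]
    have h3 : ∑ y, S y i * D y i = ∑ y, S i y * D y i :=
      Finset.sum_congr rfl fun y _ => by rw [fact2]
    rw [h3]; ring
  · simp only [if_neg hij, mul_add, add_mul, mul_ite, ite_mul, one_mul, mul_one,
      zero_mul, mul_zero, Finset.sum_add_distrib, Finset.sum_ite_eq, Finset.sum_ite_eq',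
      Finset.mem_univ, if_true]
    rw [Finset.sum_comm]
    simp only [Finset.sum_ite_eq, Finset.mem_univ, if_true, Finset.sum_add_distrib,
      if_neg hij, if_neg (Ne.symm hij), Finset.sum_const_zero, add_zero, zero_add]
    rw [fact2 j i]; ring
end

section
/- Solving the full doubly stochastic approximation problem for symmetric C is equivalent to solving the reduced problem: minimize (1/2)‖p ⊙ (x_u − c_u)‖² over x_u ≥ 0 with A x_u = 1ₙ, where p has entries 2 at diagonal positions and √2 at off-diagonal upper-triangular positions of the support of C. Precisely: every feasible point x_u of the reduced problem yields a feasible symmetric X of the original with equal objective value via X = X_u + X_uᵀ, H_uᵀ x_u = vec(X_u), and conversely every symmetric feasible X of the original yields a feasible x_u with equal objective value; hence the problems have the same optimal value and the optimizers correspond bijectively. -/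
open Matrix
open scoped Matrix

/-- The upper triangular weighting matrix `U` with `1/2` on the diagonal and `1` above it. -/
noncomputable def upperHalf (n : ℕ) : Matrix (Fin n) (Fin n) ℝ :=
  Matrix.of fun i j => if i = j then (1 / 2 : ℝ) else if i < j then 1 else 0

/-- Feasibility for the original doubly stochastic approximation problem. -/
def DSFeasible {n : ℕ} (C X : Matrix (Fin n) (Fin n) ℝ) : Prop :=
  (∀ i j, 0 ≤ X i j) ∧ (∀ i j, C i j = 0 → X i j = 0) ∧
    X.mulVec (fun _ => 1) = (fun _ => 1) ∧ Xᵀ.mulVec (fun _ => 1) = (fun _ => 1)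

lemma huT_apply {n m : ℕ} (ι : Fin m → Fin n × Fin n) (hι : Function.Injective ι)
    (Hu : Matrix (Fin m) (Fin n × Fin n) ℝ)
    (hHu : ∀ k p, Hu k p = if ι k = p then 1 else 0)
    (v : Fin m → ℝ) (k : Fin m) : Huᵀ.mulVec v (ι k) = v k := by
  simp only [Matrix.mulVec, dotProduct, Matrix.transpose_apply]
  rw [Finset.sum_eq_single k]
  · rw [hHu, if_pos rfl, one_mul]
  · intro k' _ hk'
    rw [hHu, if_neg (fun h => hk' (hι h)), zero_mul]
  · simp

lemma huT_zero {n m : ℕ} (ι : Fin m → Fin n × Fin n)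
    (Hu : Matrix (Fin m) (Fin n × Fin n) ℝ)
    (hHu : ∀ k p, Hu k p = if ι k = p then 1 else 0)
    (v : Fin m → ℝ) (q : Fin n × Fin n) (hq : ∀ k, ι k ≠ q) :
    Huᵀ.mulVec v q = 0 := by
  simp only [Matrix.mulVec, dotProduct, Matrix.transpose_apply]
  exact Finset.sum_eq_zero fun k _ => by rw [hHu, if_neg (hq k), zero_mul]

lemma hu_apply {n m : ℕ} (ι : Fin m → Fin n × Fin n)
    (Hu : Matrix (Fin m) (Fin n × Fin n) ℝ)
    (hHu : ∀ k p, Hu k p = if ι k = p then 1 else 0)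
    (w : Fin n × Fin n → ℝ) (k : Fin m) : Hu.mulVec w k = w (ι k) := by
  simp only [Matrix.mulVec, dotProduct, hHu, ite_mul, one_mul, zero_mul]
  simp [Finset.sum_ite_eq]

/-- Equivalence of the original problem `(𝒫)` with the reduced problem `(𝒫₂)`:
feasible points correspond with equal objective values in both directions. -/
theorem reduced_problem_equivalence {n m : ℕ} (C : Matrix (Fin n) (Fin n) ℝ) (hC : Cᵀ = C)
    (Su : Matrix (Fin n) (Fin n) ℝ)
    (hSudef : ∀ i j, Su i j = if C i j ≠ 0 ∧ i ≤ j then 1 else 0)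
    (ι : Fin m → Fin n × Fin n) (hι : Function.Injective ι)
    (hrange : ∀ p : Fin n × Fin n, Su p.2 p.1 = 1 ↔ ∃ k, ι k = p)
    (Hu : Matrix (Fin m) (Fin n × Fin n) ℝ)
    (hHu : ∀ k p, Hu k p = if ι k = p then 1 else 0)
    (A : Matrix (Fin n) (Fin m) ℝ) (hA : A = (rowSumMat n + colSumMat n) * Huᵀ)
    (cu : Fin m → ℝ) (hcu : cu = Hu.mulVec (mvec (upperHalf n ⊙ C)))
    (p : Fin m → ℝ) (hp : ∀ k, p k = if (ι k).1 = (ι k).2 then 2 else Real.sqrt 2) :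
    (∀ xu : Fin m → ℝ, (∀ k, 0 ≤ xu k) → A.mulVec xu = (fun _ => 1) →
      ∃ X : Matrix (Fin n) (Fin n) ℝ,
        DSFeasible C X ∧ Xᵀ = X ∧ mvec (upperHalf n ⊙ X) = Huᵀ.mulVec xu ∧
          (1 / 2 : ℝ) * ∑ k, (p k * (xu k - cu k)) ^ 2 =
            (1 / 2 : ℝ) * ∑ i, ∑ j, (X i j - C i j) ^ 2) ∧
    (∀ X : Matrix (Fin n) (Fin n) ℝ, DSFeasible C X → Xᵀ = X →
      letI xu : Fin m → ℝ := Hu.mulVec (mvec (upperHalf n ⊙ X))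
      (∀ k, 0 ≤ xu k) ∧ A.mulVec xu = (fun _ => 1) ∧
        (1 / 2 : ℝ) * ∑ k, (p k * (xu k - cu k)) ^ 2 =
          (1 / 2 : ℝ) * ∑ i, ∑ j, (X i j - C i j) ^ 2) := by
  have hCs : ∀ i j, C j i = C i j := fun i j => congrFun (congrFun hC i) j
  -- membership facts
  have hmem : ∀ k, C (ι k).2 (ι k).1 ≠ 0 ∧ (ι k).2 ≤ (ι k).1 := by
    intro k
    have h := (hrange (ι k)).mpr ⟨k, rfl⟩
    rw [hSudef] at h
    by_contra hc
    rw [if_neg hc] at h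
    norm_num at h
  have hnotmem : ∀ q : Fin n × Fin n, (¬ ∃ k, ι k = q) → q.2 ≤ q.1 → C q.2 q.1 = 0 := by
    intro q hnq hle
    by_contra hne
    exact hnq ((hrange q).mp (by rw [hSudef, if_pos ⟨hne, hle⟩]))
  -- action of A
  have hrowS : ∀ (y : Fin n × Fin n → ℝ) (i : Fin n),
      (rowSumMat n).mulVec y i = ∑ a, y (a, i) := by
    intro y i
    simp only [Matrix.mulVec, dotProduct, rowSumMat, Matrix.of_apply]
    rw [Fintype.sum_prod_type]
    refine Finset.sum_congr rfl fun a _ => ?_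
    simp [ite_mul, Finset.sum_ite_eq]
  have hcolS : ∀ (y : Fin n × Fin n → ℝ) (i : Fin n),
      (colSumMat n).mulVec y i = ∑ b, y (i, b) := by
    intro y i
    simp only [Matrix.mulVec, dotProduct, colSumMat, Matrix.of_apply]
    rw [Fintype.sum_prod_type]
    rw [Finset.sum_comm]
    refine Finset.sum_congr rfl fun b _ => ?_
    simp [ite_mul, Finset.sum_ite_eq]
  have hAmul : ∀ (v : Fin m → ℝ) (i : Fin n), A.mulVec v i
      = (∑ a, Huᵀ.mulVec v (a, i)) + (∑ b, Huᵀ.mulVec v (i, b)) := by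
    intro v i
    rw [hA, ← Matrix.mulVec_mulVec, Matrix.add_mulVec, Pi.add_apply, hrowS, hcolS]
  -- the key objective-value identity
  have key : ∀ (X : Matrix (Fin n) (Fin n) ℝ) (xu : Fin m → ℝ),
      Xᵀ = X → (∀ i j, C i j = 0 → X i j = 0) →
      mvec (upperHalf n ⊙ X) = Huᵀ.mulVec xu →
      ∑ k, (p k * (xu k - cu k)) ^ 2 = ∑ i, ∑ j, (X i j - C i j) ^ 2 := by
    intro X xu hXsymm hXsp hvec
    have hXs : ∀ i j, X j i = X i j := fun i j => congrFun (congrFun hXsymm i) j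
    have hxu : ∀ k, xu k = (upperHalf n ⊙ X) (ι k).2 (ι k).1 := by
      intro k
      have h := congrFun hvec (ι k)
      rw [huT_apply ι hι Hu hHu] at h
      exact h.symm
    have hcuk : ∀ k, cu k = (upperHalf n ⊙ C) (ι k).2 (ι k).1 := by
      intro k
      rw [hcu, hu_apply ι Hu hHu]
      rfl
    have termeq : ∀ k, (p k * (xu k - cu k)) ^ 2
        = (X (ι k).2 (ι k).1 - C (ι k).2 (ι k).1) ^ 2
          + (if (ι k).1 = (ι k).2 then 0 else (X (ι k).2 (ι k).1 - C (ι k).2 (ι k).1) ^ 2) := by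
      intro k
      obtain ⟨hCne, hle⟩ := hmem k
      rw [hxu, hcuk, hp]
      by_cases hd : (ι k).1 = (ι k).2
      · rw [if_pos hd, if_pos hd]
        simp only [Matrix.hadamard_apply, upperHalf, Matrix.of_apply, if_pos hd.symm]
        ring
      · have hlt : (ι k).2 < (ι k).1 := lt_of_le_of_ne hle (fun h => hd h.symm)
        rw [if_neg hd, if_neg hd]
        simp only [Matrix.hadamard_apply, upperHalf, Matrix.of_apply, if_neg (ne_of_lt hlt),
          if_pos hlt]
        rw [mul_pow, Real.sq_sqrt (by norm_num : (0:ℝ) ≤ 2)]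
        ring
    have sumT : ∀ (f : Fin n × Fin n → ℝ),
        (∀ q : Fin n × Fin n, (¬ ∃ k, ι k = q) → q.2 ≤ q.1 → f q = 0) →
        ∑ k, f (ι k) = ∑ q ∈ Finset.univ.filter (fun q : Fin n × Fin n => q.2 ≤ q.1), f q := by
      intro f hf
      rw [show (∑ k, f (ι k)) = ∑ q ∈ Finset.univ.image ι, f q from
        (Finset.sum_image (fun k _ k' _ h => hι h)).symm]
      apply Finset.sum_subset
      · intro q hq
        simp only [Finset.mem_image] at hq
        obtain ⟨k, _, rfl⟩ := hq
        exact Finset.mem_filter.mpr ⟨Finset.mem_univ _, (hmem k).2⟩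
      · intro q hq1 hq2
        refine hf q ?_ (Finset.mem_filter.mp hq1).2
        rintro ⟨k, hk⟩
        exact hq2 (Finset.mem_image.mpr ⟨k, Finset.mem_univ _, hk⟩)
    have vanish : ∀ q : Fin n × Fin n, (¬ ∃ k, ι k = q) → q.2 ≤ q.1 →
        (X q.2 q.1 - C q.2 q.1) ^ 2 = 0 := by
      intro q hq hle
      have hc0 := hnotmem q hq hle
      rw [hc0, hXsp _ _ hc0]
      ring
    have hs1 : ∑ k, (X (ι k).2 (ι k).1 - C (ι k).2 (ι k).1) ^ 2
        = ∑ q ∈ Finset.univ.filter (fun q : Fin n × Fin n => q.2 ≤ q.1),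
            (X q.2 q.1 - C q.2 q.1) ^ 2 :=
      sumT _ vanish
    have hs2 : ∑ k, (if (ι k).1 = (ι k).2 then (0:ℝ)
          else (X (ι k).2 (ι k).1 - C (ι k).2 (ι k).1) ^ 2)
        = ∑ q ∈ Finset.univ.filter (fun q : Fin n × Fin n => q.2 ≤ q.1),
            (if q.1 = q.2 then (0:ℝ) else (X q.2 q.1 - C q.2 q.1) ^ 2) :=
      sumT (fun q => if q.1 = q.2 then (0:ℝ) else (X q.2 q.1 - C q.2 q.1) ^ 2)
        (fun q hq hle => by
          show (if q.1 = q.2 then (0:ℝ) else (X q.2 q.1 - C q.2 q.1) ^ 2) = 0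
          rw [vanish q hq hle]; simp)
    have lhs_eq : ∑ k, (p k * (xu k - cu k)) ^ 2
        = (∑ q ∈ Finset.univ.filter (fun q : Fin n × Fin n => q.2 ≤ q.1),
            (X q.2 q.1 - C q.2 q.1) ^ 2)
          + ∑ q ∈ Finset.univ.filter (fun q : Fin n × Fin n => q.2 ≤ q.1),
            (if q.1 = q.2 then (0:ℝ) else (X q.2 q.1 - C q.2 q.1) ^ 2) := by
      rw [← hs1, ← hs2, ← Finset.sum_add_distrib]
      exact Finset.sum_congr rfl fun k _ => termeq k
    rw [lhs_eq]
    -- now the purely combinatorial identity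
    have e1 : ∑ i, ∑ j, (X i j - C i j) ^ 2
        = ∑ q : Fin n × Fin n, (X q.2 q.1 - C q.2 q.1) ^ 2 := by
      rw [Fintype.sum_prod_type]
      exact Finset.sum_comm
    rw [e1, ← Finset.sum_filter_add_sum_filter_not Finset.univ
      (fun q : Fin n × Fin n => q.2 ≤ q.1) (fun q => (X q.2 q.1 - C q.2 q.1) ^ 2)]
    congr 1
    rw [Finset.sum_filter, Finset.sum_filter, Fintype.sum_prod_type, Fintype.sum_prod_type]
    rw [Finset.sum_comm]
    refine Finset.sum_congr rfl fun x _ => Finset.sum_congr rfl fun y _ => ?_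
    show (if x ≤ y then (if y = x then (0:ℝ) else (X x y - C x y) ^ 2) else 0)
      = (if ¬ y ≤ x then (X y x - C y x) ^ 2 else 0)
    rcases lt_trichotomy x y with h | h | h
    · rw [if_pos (le_of_lt h), if_neg (ne_of_gt h), if_pos (not_le.mpr h), hXs y x, hCs y x]
    · subst h
      simp
    · rw [if_neg (not_le.mpr h), if_neg (not_not_intro (le_of_lt h))]
  constructor
  · -- reduced feasible point gives an original feasible point
    intro xu hxnn hxfeas
    set y : Fin n × Fin n → ℝ := Huᵀ.mulVec xu with hy
    have hynn : ∀ q, 0 ≤ y q := by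
      intro q
      simp only [hy, Matrix.mulVec, dotProduct, Matrix.transpose_apply]
      refine Finset.sum_nonneg fun k _ => ?_
      rw [hHu]
      split_ifs with h
      · simpa using hxnn k
      · simp
    have hy0 : ∀ q : Fin n × Fin n, ¬ (C q.2 q.1 ≠ 0 ∧ q.2 ≤ q.1) → y q = 0 := by
      intro q hq
      refine huT_zero ι Hu hHu xu q fun k hk => ?_
      refine hq ?_
      have h2 := (hrange q).mpr ⟨k, hk⟩
      rw [hSudef] at h2
      by_contra hc
      rw [if_neg hc] at h2
      norm_num at h2
    set X : Matrix (Fin n) (Fin n) ℝ := Matrix.of fun i j => y (j, i) + y (i, j) with hXdef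
    have hXsym : Xᵀ = X := by
      ext i j
      simp only [hXdef, Matrix.transpose_apply, Matrix.of_apply]
      ring
    have hXsp : ∀ i j, C i j = 0 → X i j = 0 := by
      intro i j hCij
      have h1 : y (j, i) = 0 := hy0 (j, i) (fun h => h.1 hCij)
      have h2 : y (i, j) = 0 := hy0 (i, j) (fun h => h.1 (by rw [hCs]; exact hCij))
      simp [hXdef, h1, h2]
    have hveq : mvec (upperHalf n ⊙ X) = Huᵀ.mulVec xu := by
      funext q
      obtain ⟨a, b⟩ := q
      show (upperHalf n ⊙ X) b a = y (a, b)
      simp only [hXdef, Matrix.hadamard_apply, upperHalf, Matrix.of_apply]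
      rcases lt_trichotomy a b with hab | hab | hab
      · have hz : y (a, b) = 0 := hy0 (a, b) (fun h => absurd h.2 (not_le.mpr hab))
        rw [if_neg (ne_of_gt hab), if_neg (not_lt.mpr (le_of_lt hab)), hz]
        ring
      · subst hab
        rw [if_pos rfl]
        ring
      · have hz : y (b, a) = 0 := hy0 (b, a) (fun h => absurd h.2 (not_le.mpr hab))
        rw [if_neg (ne_of_lt hab), if_pos hab, hz]
        ring
    have hrow : X.mulVec (fun _ => 1) = (fun _ => 1) := by
      funext i
      have hfi := congrFun hxfeas i
      rw [hAmul] at hfi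
      show ∑ j, X i j * 1 = 1
      calc ∑ j, X i j * 1 = ∑ j, (y (j, i) + y (i, j)) := by
            refine Finset.sum_congr rfl fun j _ => ?_
            simp [hXdef]
        _ = (∑ a, y (a, i)) + (∑ b, y (i, b)) := Finset.sum_add_distrib
        _ = 1 := hfi
    refine ⟨X, ⟨fun i j => add_nonneg (hynn _) (hynn _), hXsp, hrow, by rw [hXsym]; exact hrow⟩,
      hXsym, hveq, by rw [key X xu hXsym hXsp hveq]⟩
  · -- original feasible point gives a reduced feasible point
    intro X hXfeas hXsymm
    obtain ⟨hXnn, hXsp, hXrow, hXcol⟩ := hXfeas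
    have hXs : ∀ i j, X j i = X i j := fun i j => congrFun (congrFun hXsymm i) j
    set xu : Fin m → ℝ := Hu.mulVec (mvec (upperHalf n ⊙ X)) with hxudef
    have hxuk : ∀ k, xu k = (upperHalf n ⊙ X) (ι k).2 (ι k).1 := by
      intro k
      rw [hxudef, hu_apply ι Hu hHu]
      rfl
    have hUXnn : ∀ i j, 0 ≤ (upperHalf n ⊙ X) i j := by
      intro i j
      simp only [Matrix.hadamard_apply, upperHalf, Matrix.of_apply]
      split_ifs
      · exact mul_nonneg (by norm_num) (hXnn i j)
      · exact mul_nonneg zero_le_one (hXnn i j)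
      · simp
    have hveq : mvec (upperHalf n ⊙ X) = Huᵀ.mulVec xu := by
      funext q
      by_cases hq : ∃ k, ι k = q
      · obtain ⟨k, rfl⟩ := hq
        rw [huT_apply ι hι Hu hHu, hxuk]
        rfl
      · rw [huT_zero ι Hu hHu xu q (fun k hk => hq ⟨k, hk⟩)]
        show (upperHalf n ⊙ X) q.2 q.1 = 0
        by_cases hle : q.2 ≤ q.1
        · have hc0 := hnotmem q hq hle
          simp [Matrix.hadamard_apply, hXsp _ _ hc0]
        · have hlt : q.1 < q.2 := not_le.mp hle
          simp only [Matrix.hadamard_apply, upperHalf, Matrix.of_apply,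
            if_neg (ne_of_gt hlt), if_neg (not_lt.mpr (le_of_lt hlt))]
          ring
    refine ⟨fun k => by rw [hxuk]; exact hUXnn _ _, ?_, ?_⟩
    · funext i
      rw [hAmul, ← hveq]
      have hrow := congrFun hXrow i
      simp only [Matrix.mulVec, dotProduct, mul_one] at hrow
      show (∑ a, (upperHalf n ⊙ X) i a) + (∑ b, (upperHalf n ⊙ X) b i) = 1
      rw [← Finset.sum_add_distrib]
      rw [show ∑ j, ((upperHalf n ⊙ X) i j + (upperHalf n ⊙ X) j i) = ∑ j, X i j from
        Finset.sum_congr rfl fun j _ => by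
          simp only [Matrix.hadamard_apply, upperHalf, Matrix.of_apply]
          rcases lt_trichotomy i j with h | h | h
          · rw [if_neg (ne_of_lt h), if_pos h, if_neg (ne_of_gt h),
              if_neg (not_lt.mpr (le_of_lt h)), hXs]
            ring
          · subst h
            rw [if_pos rfl]
            ring
          · rw [if_neg (ne_of_gt h), if_neg (not_lt.mpr (le_of_lt h)),
              if_neg (ne_of_lt h), if_pos h, hXs]
            ring]
      exact hrow
    · rw [key X xu hXsymm hXsp hveq]
end

section
/- When the sparsity pattern is full, i.e. S = 1ₙ1ₙᵀ, the reduced matrix satisfies ρ A (P + σI)⁻¹ Aᵀ + Iₙ = α Iₙ + β 1ₙ1ₙᵀ with α = σρ/((2 + σ/2)(2 + σ)) + nρ/(2 + σ) + 1 and β = ρ/(2 + σ), where P = diag(p ⊙ p) with p having entries 2 at diagonal positions and √2 at strictly upper-triangular positions. -/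
open Matrix

/-!
Writing `K = 1ᵀ ⊗ I + I ⊗ 1ᵀ`, we have `A = K Huᵀ`, and conjugating the diagonal matrix
`(P + σI)⁻¹` by the selection matrix `Hu` places its entries `1/(4+σ)` (diagonal pairs) and
`1/(2+σ)` (off-diagonal pairs) on a triangular matrix `D`. For every `D`,
`K diag(vec D) Kᵀ = (D + Dᵀ) + diag((D + Dᵀ) 1)`, and here `D + Dᵀ` is `2/(4+σ)` on the diagonal
and `1/(2+σ)` off it, so the reduced matrix is a combination of `I` and `11ᵀ`.
-/

theorem rowSumMat_add_colSumMat_mul_diagonal_mul_transpose {n : ℕ}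
    (D : Matrix (Fin n) (Fin n) ℝ) :
    (rowSumMat n + colSumMat n) * diagonal (fun q : Fin n × Fin n => D q.1 q.2) *
        (rowSumMat n + colSumMat n)ᵀ =
      D + Dᵀ + diagonal ((D + Dᵀ) *ᵥ 1) := by
  ext i j
  rw [mul_apply]
  simp only [mul_diagonal, Matrix.add_apply, transpose_apply, rowSumMat, colSumMat, of_apply,
    Fintype.sum_prod_type, add_mul, mul_add, ite_mul, mul_ite, one_mul, mul_one, zero_mul, mul_zero,
    Finset.sum_add_distrib, Finset.sum_ite_eq, Finset.mem_univ, if_true]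
  by_cases h : i = j
  · subst h
    simp only [↓reduceIte, Finset.sum_ite_irrel, Finset.sum_add_distrib, Finset.sum_ite_eq,
      Finset.mem_univ, Finset.sum_const_zero, diagonal_apply_eq, mulVec, dotProduct,
      Matrix.add_apply, transpose_apply, Pi.one_apply, mul_one]
    ring
  · simp [h]

theorem selection_transpose_mul_diagonal_mul {m β α : Type*} [Fintype m] [DecidableEq m]
    [DecidableEq β] [Semiring α] (ι : m → β) (H : Matrix m β α)
    (hH : ∀ k q, H k q = if ι k = q then 1 else 0) (w : m → α) :
    Hᵀ * diagonal w * H = diagonal (fun q => ∑ k, if ι k = q then w k else 0) := by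
  ext q q'
  rw [mul_apply]
  simp only [mul_diagonal, transpose_apply, hH, diagonal_apply, ite_mul, mul_ite, one_mul,
    mul_one, zero_mul, mul_zero]
  split_ifs with h
  · subst h
    exact Finset.sum_congr rfl fun k _ => by split_ifs <;> rfl
  · refine Finset.sum_eq_zero fun k _ => ?_
    grind

theorem Function.Injective.sum_ite_apply_eq {m β α : Type*} [Fintype m] [DecidableEq β]
    [AddCommMonoid α] {ι : m → β} (hι : ι.Injective) (g : β → α) (q : β) :
    ∑ k, (if ι k = q then g (ι k) else 0) = if q ∈ Set.range ι then g q else 0 := by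
  split_ifs with hq
  · obtain ⟨k₀, rfl⟩ := hq
    rw [Finset.sum_eq_single k₀ (fun k _ hk => if_neg (hι.ne hk)) (by simp), if_pos rfl]
  · exact Finset.sum_eq_zero fun k _ => if_neg fun h => hq ⟨k, h⟩

theorem Matrix.inv_diagonal_of_ne_zero {m K : Type*} [Fintype m] [DecidableEq m] [Field K]
    (v : m → K) (hv : ∀ i, v i ≠ 0) : (diagonal v)⁻¹ = diagonal v⁻¹ :=
  inv_eq_left_inv <| by
    rw [diagonal_mul_diagonal, ← diagonal_one]
    exact congrArg diagonal (funext fun i => inv_mul_cancel₀ (hv i))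

theorem lowerTriangle_add_transpose {n : ℕ} (x y : ℝ) :
    (of fun a b : Fin n => if b ≤ a then (if a = b then x else y) else 0) +
        (of fun a b : Fin n => if b ≤ a then (if a = b then x else y) else 0)ᵀ =
      of fun a b => if a = b then 2 * x else y := by
  ext a b
  rcases lt_trichotomy a b with h | rfl | h
  · simp [h.ne, h.ne', h.not_ge, h.le]
  · simp; ring
  · simp [h.ne', h.not_ge, h.le]

theorem of_ite_eq_mulVec_one {n : ℕ} (c y : ℝ) :
    (of fun a b : Fin n => if a = b then c else y) *ᵥ 1 = fun _ => c - y + n * y := by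
  ext a
  have : ∀ b, (if a = b then c else y) = y + if a = b then c - y else 0 := fun b => by
    split_ifs <;> ring
  simp only [mulVec, dotProduct, of_apply, Pi.one_apply, mul_one, this, Finset.sum_add_distrib,
    Finset.sum_ite_eq, Finset.mem_univ, if_true, Finset.sum_const, Finset.card_univ,
    Fintype.card_fin, nsmul_eq_mul]
  ring

theorem reduced_matrix_dense_case_general {n m : ℕ}
    (ι : Fin m → Fin n × Fin n) (hι : Function.Injective ι)
    (hrange : ∀ p : Fin n × Fin n, p.2 ≤ p.1 ↔ ∃ k, ι k = p)
    (Hu : Matrix (Fin m) (Fin n × Fin n) ℝ)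
    (hHu : ∀ k p, Hu k p = if ι k = p then 1 else 0)
    (A : Matrix (Fin n) (Fin m) ℝ) (hA : A = (rowSumMat n + colSumMat n) * Huᵀ)
    (p : Fin m → ℝ) (hp : ∀ k, p k = if (ι k).1 = (ι k).2 then 2 else Real.sqrt 2)
    (P : Matrix (Fin m) (Fin m) ℝ) (hP : P = Matrix.diagonal (fun k => p k * p k))
    (ρ σ : ℝ) (hσ : 0 < σ) :
    ρ • (A * (P + σ • (1 : Matrix (Fin m) (Fin m) ℝ))⁻¹ * Aᵀ) +
        (1 : Matrix (Fin n) (Fin n) ℝ) =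
      (σ * ρ / ((2 + σ / 2) * (2 + σ)) + n * ρ / (2 + σ) + 1) •
          (1 : Matrix (Fin n) (Fin n) ℝ) +
        (ρ / (2 + σ)) • (Matrix.of fun _ _ => (1 : ℝ)) := by
  set g : Fin n × Fin n → ℝ := fun q => if q.1 = q.2 then (4 + σ)⁻¹ else (2 + σ)⁻¹
  have hinv : (P + σ • (1 : Matrix (Fin m) (Fin m) ℝ))⁻¹ = diagonal fun k => g (ι k) := by
    have hdiag : ∀ k, p k * p k + σ = (g (ι k))⁻¹ := fun k => by
      simp only [g, hp]
      split_ifs <;> norm_num [Real.mul_self_sqrt]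
    rw [hP, smul_one_eq_diagonal, diagonal_add, funext hdiag,
      inv_diagonal_of_ne_zero _ fun k => inv_ne_zero (by positivity)]
    simp only [Pi.inv_def, inv_inv]
  have hfactor : A * diagonal (fun k => g (ι k)) * Aᵀ =
      (rowSumMat n + colSumMat n) * (Huᵀ * diagonal (fun k => g (ι k)) * Hu) *
        (rowSumMat n + colSumMat n)ᵀ := by
    rw [hA, transpose_mul, transpose_transpose]
    simp only [Matrix.mul_assoc]
  have hselect : Huᵀ * diagonal (fun k => g (ι k)) * Hu =
      diagonal fun q : Fin n × Fin n =>
        (of fun a b : Fin n => if b ≤ a then (if a = b then (4 + σ)⁻¹ else (2 + σ)⁻¹) else 0)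
          q.1 q.2 := by
    rw [selection_transpose_mul_diagonal_mul ι Hu hHu]
    congr 1
    ext q
    simp only [hι.sum_ite_apply_eq g q, of_apply, Set.mem_range, ← hrange]
    rfl
  rw [hinv, hfactor, hselect, rowSumMat_add_colSumMat_mul_diagonal_mul_transpose,
    lowerTriangle_add_transpose, of_ite_eq_mulVec_one]
  have h2 : (2 + σ) ≠ 0 := by positivity
  have h4 : (4 + σ) ≠ 0 := by positivity
  ext i j
  rcases eq_or_ne i j with rfl | h
  · simp only [smul_add, smul_of, Matrix.add_apply, of_apply, Pi.smul_apply, ↓reduceIte,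
      smul_eq_mul, Matrix.smul_apply, diagonal_apply_eq, one_apply_eq, mul_one]
    field_simp
    ring
  · simp [h, div_eq_mul_inv]

/-- For the fully dense pattern `S = 11ᵀ`, the reduced matrix is
`ρ A (P + σI)⁻¹ Aᵀ + I = α I + β 11ᵀ` with `α = σρ/((2+σ/2)(2+σ)) + nρ/(2+σ) + 1` and
`β = ρ/(2+σ)`. -/
theorem reduced_matrix_dense_case {n m : ℕ} (hn : 1 ≤ n)
    (ι : Fin m → Fin n × Fin n) (hι : Function.Injective ι)
    (hrange : ∀ p : Fin n × Fin n, p.2 ≤ p.1 ↔ ∃ k, ι k = p)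
    (Hu : Matrix (Fin m) (Fin n × Fin n) ℝ)
    (hHu : ∀ k p, Hu k p = if ι k = p then 1 else 0)
    (A : Matrix (Fin n) (Fin m) ℝ) (hA : A = (rowSumMat n + colSumMat n) * Huᵀ)
    (p : Fin m → ℝ) (hp : ∀ k, p k = if (ι k).1 = (ι k).2 then 2 else Real.sqrt 2)
    (P : Matrix (Fin m) (Fin m) ℝ) (hP : P = Matrix.diagonal (fun k => p k * p k))
    (ρ σ : ℝ) (hρ : 0 < ρ) (hσ : 0 < σ) :
    ρ • (A * (P + σ • (1 : Matrix (Fin m) (Fin m) ℝ))⁻¹ * Aᵀ) +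
        (1 : Matrix (Fin n) (Fin n) ℝ) =
      (σ * ρ / ((2 + σ / 2) * (2 + σ)) + n * ρ / (2 + σ) + 1) •
          (1 : Matrix (Fin n) (Fin n) ℝ) +
        (ρ / (2 + σ)) • (Matrix.of fun _ _ => (1 : ℝ)) :=
  reduced_matrix_dense_case_general ι hι hrange Hu hHu A hA p hp P hP ρ σ hσ
end
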